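/- arXiv:2009.04601 — 7 statements merged into one kernel-verified Lean document; each statement's English description precedes it below -/
import Mathlib

section
/- Let T̄ be a 3×3 real symmetric matrix with trace(T̄) = 0 and Frobenius norm 1, let v₂ ∈ ℝ³ be a unit vector, let {e₁, e₂} be an orthonormal basis of the orthogonal complement of v₂, and let S be the 2×2 real symmetric matrix with entries S_ij = e_iᵀ T̄ e_j. For θ ∈ ℝ set A = R_{θ/2+π/4} · S · R_{θ/2−π/4}. Then (trace A)² − 4·det A = 2 − 4·(v₂ᵀ T̄² v₂) + cos²θ · (v₂ᵀ T̄ v₂)². Consequently, the characteristic polynomial of A has a real root if and only if 1/2 − v₂ᵀ T̄² v₂ + (1/4)·cos²θ·(v₂ᵀ T̄ v₂)² ≥ 0, and it has a repeated real root if and only if equality holds. -/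
open Matrix Real Polynomial

/-- The 2×2 rotation matrix `R_φ = [[cos φ, −sin φ], [sin φ, cos φ]]`. -/
noncomputable def rot (φ : ℝ) : Matrix (Fin 2) (Fin 2) ℝ :=
  !![Real.cos φ, -Real.sin φ; Real.sin φ, Real.cos φ]

lemma my_charpoly_fin_two (A : Matrix (Fin 2) (Fin 2) ℝ) :
    A.charpoly = X ^ 2 - C A.trace * X + C A.det := by
  rw [Matrix.charpoly, Matrix.det_fin_two, Matrix.charmatrix_apply_eq,
    Matrix.charmatrix_apply_eq, Matrix.charmatrix_apply_ne _ _ _ (by decide),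
    Matrix.charmatrix_apply_ne _ _ _ (by decide), Matrix.trace_fin_two, Matrix.det_fin_two]
  simp only [map_add, Polynomial.C_mul, map_sub]
  ring

set_option maxHeartbeats 1000000 in
theorem stmt0 (T : Matrix (Fin 3) (Fin 3) ℝ) (hsymm : T.IsSymm)
    (htr : T.trace = 0) (hnorm : Real.sqrt (Matrix.trace (Tᵀ * T)) = 1)
    (v : Fin 3 → ℝ) (hv : v ⬝ᵥ v = 1)
    (e₁ e₂ : Fin 3 → ℝ) (he₁ : e₁ ⬝ᵥ e₁ = 1) (he₂ : e₂ ⬝ᵥ e₂ = 1)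
    (he₁₂ : e₁ ⬝ᵥ e₂ = 0) (he₁v : e₁ ⬝ᵥ v = 0) (he₂v : e₂ ⬝ᵥ v = 0)
    (θ : ℝ)
    (S : Matrix (Fin 2) (Fin 2) ℝ)
    (hS : S = !![e₁ ⬝ᵥ T.mulVec e₁, e₁ ⬝ᵥ T.mulVec e₂;
                 e₂ ⬝ᵥ T.mulVec e₁, e₂ ⬝ᵥ T.mulVec e₂])
    (A : Matrix (Fin 2) (Fin 2) ℝ)
    (hA : A = rot (θ / 2 + π / 4) * S * rot (θ / 2 - π / 4)) :
    (A.trace) ^ 2 - 4 * A.det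
      = 2 - 4 * (v ⬝ᵥ (T * T).mulVec v) + Real.cos θ ^ 2 * (v ⬝ᵥ T.mulVec v) ^ 2 ∧
    ((∃ x : ℝ, A.charpoly.IsRoot x) ↔
      1 / 2 - v ⬝ᵥ (T * T).mulVec v
        + (1 / 4) * Real.cos θ ^ 2 * (v ⬝ᵥ T.mulVec v) ^ 2 ≥ 0) ∧
    ((∃ x : ℝ, A.charpoly = (X - C x) ^ 2) ↔
      1 / 2 - v ⬝ᵥ (T * T).mulVec v
        + (1 / 4) * Real.cos θ ^ 2 * (v ⬝ᵥ T.mulVec v) ^ 2 = 0) := by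
  have he₁' := he₁; have he₂' := he₂; have hv' := hv
  have he₁₂' := he₁₂; have he₁v' := he₁v; have he₂v' := he₂v
  simp only [dotProduct, Fin.sum_univ_three] at he₁' he₂' hv' he₁₂' he₁v' he₂v'
  have hM : ∃ M : Matrix (Fin 3) (Fin 3) ℝ, M = Matrix.of ![e₁, e₂, v] := ⟨_, rfl⟩
  obtain ⟨M, hM⟩ := hM
  have hMMT : M * Mᵀ = 1 := by
    rw [hM]; ext i j
    fin_cases i <;> fin_cases j <;>
      simp [Matrix.mul_apply, Matrix.one_apply, Fin.sum_univ_three, Matrix.transpose_apply,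
        Matrix.vecHead, Matrix.vecTail] <;>
      linarith
  have hMTM : Mᵀ * M = 1 := mul_eq_one_comm.mp hMMT
  have key : ∀ x y : Fin 3 → ℝ, x ⬝ᵥ y =
      (e₁ ⬝ᵥ x) * (e₁ ⬝ᵥ y) + (e₂ ⬝ᵥ x) * (e₂ ⬝ᵥ y) + (v ⬝ᵥ x) * (v ⬝ᵥ y) := by
    intro x y
    have h1 : x ⬝ᵥ y = x ⬝ᵥ (Mᵀ * M) *ᵥ y := by rw [hMTM, Matrix.one_mulVec]
    rw [h1, ← Matrix.mulVec_mulVec, Matrix.dotProduct_mulVec, Matrix.vecMul_transpose, hM]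
    simp [Matrix.mulVec, dotProduct, Fin.sum_univ_three]
  have keytr : ∀ N : Matrix (Fin 3) (Fin 3) ℝ, N.trace =
      e₁ ⬝ᵥ N *ᵥ e₁ + e₂ ⬝ᵥ N *ᵥ e₂ + v ⬝ᵥ N *ᵥ v := by
    intro N
    have h1 : N.trace = (Mᵀ * (M * N)).trace := by
      rw [← Matrix.mul_assoc, hMTM, Matrix.one_mul]
    rw [h1, Matrix.trace_mul_comm, hM]
    simp [Matrix.trace, Matrix.diag, Matrix.mul_apply, Fin.sum_univ_three,
      Matrix.mulVec, Matrix.vecMul, dotProduct, Matrix.transpose_apply, Matrix.vecHead,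
      Matrix.vecTail]
    ring
  have hTsym : ∀ x y : Fin 3 → ℝ, x ⬝ᵥ T *ᵥ y = y ⬝ᵥ T *ᵥ x := by
    intro x y
    rw [Matrix.dotProduct_mulVec, ← Matrix.mulVec_transpose, hsymm.eq, dotProduct_comm]
  -- fact 1
  have F1 : e₁ ⬝ᵥ T *ᵥ e₁ + e₂ ⬝ᵥ T *ᵥ e₂ + v ⬝ᵥ T *ᵥ v = 0 := by
    rw [← keytr T, htr]
  have hTT : ∀ x : Fin 3 → ℝ, x ⬝ᵥ (Tᵀ * T) *ᵥ x = (T *ᵥ x) ⬝ᵥ (T *ᵥ x) := by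
    intro x
    rw [← Matrix.mulVec_mulVec, Matrix.dotProduct_mulVec, Matrix.vecMul_transpose]
  have hTTsame : v ⬝ᵥ (T * T) *ᵥ v = (T *ᵥ v) ⬝ᵥ (T *ᵥ v) := by
    have h := hTT v; rwa [hsymm.eq] at h
  -- fact 3
  have F3 : v ⬝ᵥ (T * T) *ᵥ v
      = (e₁ ⬝ᵥ T *ᵥ v) ^ 2 + (e₂ ⬝ᵥ T *ᵥ v) ^ 2 + (v ⬝ᵥ T *ᵥ v) ^ 2 := by
    rw [hTTsame, key (T *ᵥ v) (T *ᵥ v)]; ring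
  -- trace(TᵀT) = 1
  have htr2 : (Tᵀ * T).trace = 1 := by
    have h0 : (0:ℝ) ≤ (Tᵀ * T).trace := by
      by_contra h
      push_neg at h
      rw [Real.sqrt_eq_zero_of_nonpos h.le] at hnorm
      norm_num at hnorm
    have h1 := Real.sq_sqrt h0
    rw [hnorm, one_pow] at h1
    exact h1.symm
  -- fact 2
  have F2 : (e₁ ⬝ᵥ T *ᵥ e₁) ^ 2 + (e₂ ⬝ᵥ T *ᵥ e₂) ^ 2 + (v ⬝ᵥ T *ᵥ v) ^ 2
      + 2 * (e₁ ⬝ᵥ T *ᵥ e₂) ^ 2 + 2 * (e₁ ⬝ᵥ T *ᵥ v) ^ 2 + 2 * (e₂ ⬝ᵥ T *ᵥ v) ^ 2 = 1 := by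
    have hsum := keytr (Tᵀ * T)
    rw [htr2, hTT e₁, hTT e₂, hTT v, key (T *ᵥ e₁) (T *ᵥ e₁), key (T *ᵥ e₂) (T *ᵥ e₂),
      key (T *ᵥ v) (T *ᵥ v), hTsym e₂ e₁, hTsym v e₁, hTsym v e₂] at hsum
    linear_combination -hsum
  -- trace and det of A
  have hco : Real.cos (θ/2 + π/4) * Real.cos (θ/2 - π/4)
      - Real.sin (θ/2 + π/4) * Real.sin (θ/2 - π/4) = Real.cos θ := by
    have h := Real.cos_add (θ/2 + π/4) (θ/2 - π/4)
    have h2 : θ/2 + π/4 + (θ/2 - π/4) = θ := by ring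
    rw [h2] at h
    linarith
  have htrA : A.trace = Real.cos θ * (e₁ ⬝ᵥ T *ᵥ e₁ + e₂ ⬝ᵥ T *ᵥ e₂) := by
    rw [hA, hS, hTsym e₂ e₁]
    simp only [rot]
    rw [Matrix.mul_fin_two, Matrix.mul_fin_two, Matrix.trace_fin_two_of]
    linear_combination (e₁ ⬝ᵥ T *ᵥ e₁ + e₂ ⬝ᵥ T *ᵥ e₂) * hco
  have hdetA : A.det = (e₁ ⬝ᵥ T *ᵥ e₁) * (e₂ ⬝ᵥ T *ᵥ e₂) - (e₁ ⬝ᵥ T *ᵥ e₂) ^ 2 := by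
    rw [hA, Matrix.det_mul, Matrix.det_mul, hS, hTsym e₂ e₁]
    simp only [rot]
    rw [Matrix.det_fin_two_of, Matrix.det_fin_two_of, Matrix.det_fin_two_of]
    have h1 : Real.cos (θ/2 + π/4) * Real.cos (θ/2 + π/4)
        - -Real.sin (θ/2 + π/4) * Real.sin (θ/2 + π/4) = 1 := by
      linear_combination Real.sin_sq_add_cos_sq (θ/2 + π/4)
    have h2 : Real.cos (θ/2 - π/4) * Real.cos (θ/2 - π/4)
        - -Real.sin (θ/2 - π/4) * Real.sin (θ/2 - π/4) = 1 := by
      linear_combination Real.sin_sq_add_cos_sq (θ/2 - π/4)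
    rw [h1, h2]
    ring
  -- Part 1
  have hAC : e₁ ⬝ᵥ T *ᵥ e₁ + e₂ ⬝ᵥ T *ᵥ e₂ = -(v ⬝ᵥ T *ᵥ v) := by linarith [F1]
  have hsq : (e₁ ⬝ᵥ T *ᵥ e₁ + e₂ ⬝ᵥ T *ᵥ e₂) ^ 2 = (v ⬝ᵥ T *ᵥ v) ^ 2 := by
    rw [hAC]; ring
  have part1 : (A.trace) ^ 2 - 4 * A.det
      = 2 - 4 * (v ⬝ᵥ (T * T).mulVec v) + Real.cos θ ^ 2 * (v ⬝ᵥ T.mulVec v) ^ 2 := by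
    rw [htrA, hdetA, F3]
    linear_combination (Real.cos θ ^ 2 - 2) * hsq + 2 * F2
  refine ⟨part1, ?_, ?_⟩
  · constructor
    · rintro ⟨x, hx⟩
      rw [my_charpoly_fin_two] at hx
      simp only [IsRoot, eval_add, eval_sub, eval_mul, eval_pow, eval_X, eval_C] at hx
      linarith [part1, hx, sq_nonneg (2 * x - A.trace)]
    · intro h
      have hD0 : 0 ≤ (A.trace) ^ 2 - 4 * A.det := by linarith [part1, h]
      refine ⟨(A.trace + Real.sqrt ((A.trace) ^ 2 - 4 * A.det)) / 2, ?_⟩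
      rw [my_charpoly_fin_two]
      simp only [IsRoot, eval_add, eval_sub, eval_mul, eval_pow, eval_X, eval_C]
      have hs := Real.sq_sqrt hD0
      linear_combination hs / 4
  · constructor
    · rintro ⟨x, hx⟩
      rw [my_charpoly_fin_two] at hx
      have h0 := congrArg (Polynomial.eval 0) hx
      have h1 := congrArg (Polynomial.eval 1) hx
      simp only [eval_add, eval_sub, eval_mul, eval_pow, eval_X, eval_C] at h0 h1
      have ht : A.trace = 2 * x := by linarith [h0, h1]
      have hD0 : (A.trace) ^ 2 - 4 * A.det = 0 := by
        linear_combination (A.trace + 2 * x) * ht - 4 * h0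
      linarith [part1, hD0]
    · intro h
      have hD0 : (A.trace) ^ 2 - 4 * A.det = 0 := by linarith [part1, h]
      refine ⟨A.trace / 2, ?_⟩
      rw [my_charpoly_fin_two]
      have hdet : A.det = (A.trace / 2) ^ 2 := by linarith [hD0]
      have hCt : (C A.trace : ℝ[X]) = 2 * C (A.trace / 2) := by
        rw [show (2 : ℝ[X]) = C 2 from (map_ofNat Polynomial.C 2).symm]
        rw [← Polynomial.C_mul]
        congr 1
        ring
      rw [hdet, map_pow, hCt]
      ring
end

section
/- Let λ₁ ≥ λ₂ ≥ 0 ≥ λ₃ be real numbers with λ₁ + λ₂ + λ₃ = 0 and λ₁² + λ₂² + λ₃² = 1, and set μ̄ = 3√6 · λ₁λ₂λ₃ (so −1 ≤ μ̄ ≤ 0). For μ ∈ [0,1] set θ(μ) = arcsin(√3 · tan((1/3)·arcsin μ)). Then 1 − 2λ₃² + (1/2)·cos²(θ(μ))·λ₃² = 0 if and only if μ = √(1 − μ̄²). (This identifies the bifurcation mode value at which the complex domain boundary passes through the eigendirection of λ₃.) -/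
open Real

set_option maxHeartbeats 1000000

private lemma gmono (u v : ℝ) (hu0 : 0 ≤ u) (hv : v ≤ 1/4) (huv : u < v) :
    u * (3 - 4*u)^2 < v * (3 - 4*v)^2 := by
  nlinarith [mul_pos (sub_pos.2 huv) (show (0:ℝ) < (3 - 4*u - 4*v)^2 - 16*u*v by
    nlinarith [sq_nonneg (3 - 4*u - 4*v), mul_nonneg hu0 (hu0.trans_lt huv).le])]

theorem stmt5 (l₁ l₂ l₃ : ℝ)
    (h12 : l₁ ≥ l₂) (h2 : l₂ ≥ 0) (h3 : (0 : ℝ) ≥ l₃)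
    (hsum : l₁ + l₂ + l₃ = 0) (hsq : l₁ ^ 2 + l₂ ^ 2 + l₃ ^ 2 = 1)
    (μbar : ℝ) (hμbar : μbar = 3 * Real.sqrt 6 * (l₁ * l₂ * l₃))
    (θ : ℝ → ℝ)
    (hθ : ∀ μ : ℝ, θ μ = Real.arcsin (Real.sqrt 3 * Real.tan ((1 / 3) * Real.arcsin μ)))
    (μ : ℝ) (hμ0 : 0 ≤ μ) (hμ1 : μ ≤ 1) :
    (-1 ≤ μbar ∧ μbar ≤ 0) ∧
    (1 - 2 * l₃ ^ 2 + (1 / 2) * Real.cos (θ μ) ^ 2 * l₃ ^ 2 = 0 ↔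
      μ = Real.sqrt (1 - μbar ^ 2)) := by
  have h6 : Real.sqrt 6 ^ 2 = 6 := Real.sq_sqrt (by norm_num)
  have h6n : (0:ℝ) ≤ Real.sqrt 6 := Real.sqrt_nonneg 6
  have hl1 : 0 ≤ l₁ := le_trans h2 h12
  have hl12 : l₁ * l₂ = l₃^2 - 1/2 :=
    by linear_combination ((l₁ + l₂ - l₃)/2) * hsum - (1/2) * hsq
  have hx1 : 1/2 ≤ l₃^2 := by nlinarith [mul_nonneg hl1 h2]
  have hx2 : l₃^2 ≤ 2/3 := by nlinarith [sq_nonneg (l₁ - l₂)]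
  have hμsq : μbar^2 = 54 * l₃^2 * (l₃^2 - 1/2)^2 := by
    rw [hμbar]
    linear_combination (9*(l₁*l₂*l₃)^2) * h6 + (54*l₃^2*(l₁*l₂ + l₃^2 - 1/2)) * hl12
  have hμb1 : μbar^2 ≤ 1 := by
    have hid : 1 - 54*l₃^2*(l₃^2-1/2)^2 = (1 - 3/2*l₃^2)*(6*l₃^2-1)^2 := by ring
    have hnn : 0 ≤ (1 - 3/2*l₃^2)*(6*l₃^2-1)^2 :=
      mul_nonneg (by linarith) (sq_nonneg _)
    linarith [hμsq, hid ▸ hnn]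
  have hμbneg : μbar ≤ 0 := by
    rw [hμbar]
    have : l₁ * l₂ * l₃ ≤ 0 :=
      mul_nonpos_of_nonneg_of_nonpos (mul_nonneg hl1 h2) h3
    nlinarith
  refine ⟨⟨by nlinarith [sq_nonneg (μbar + 1)], hμbneg⟩, ?_⟩
  -- trig setup
  set B := (1/3) * Real.arcsin μ with hB
  set s := Real.sin B with hsdef
  have hA0 : 0 ≤ Real.arcsin μ := Real.arcsin_nonneg.2 hμ0
  have hA2 : Real.arcsin μ ≤ π/2 := Real.arcsin_le_pi_div_two μ
  have hB0 : 0 ≤ B := by positivity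
  have hB6 : B ≤ π/6 := by rw [hB]; linarith
  have hpi : 0 < π := Real.pi_pos
  have hs0 : 0 ≤ s := Real.sin_nonneg_of_nonneg_of_le_pi hB0 (by linarith)
  have shalf : s ≤ 1/2 := by
    have := Real.sin_le_sin_of_le_of_le_pi_div_two (by linarith : -(π/2) ≤ B)
      (by linarith : π/6 ≤ π/2) hB6
    rwa [Real.sin_pi_div_six] at this
  have hcos2 : Real.cos B ^ 2 = 1 - s^2 := by
    have := Real.sin_sq_add_cos_sq B; linarith
  have hcospos : 0 < Real.cos B := Real.cos_pos_of_mem_Ioo ⟨by linarith, by linarith⟩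
  set t := Real.tan B with htdef
  have ht2 : t^2 * (1 - s^2) = s^2 := by
    rw [← hcos2, htdef, Real.tan_eq_sin_div_cos]
    field_simp
    rfl
  have hs214 : s^2 ≤ 1/4 := by
    calc s^2 = s*s := sq s
    _ ≤ (1/2)*(1/2) := mul_le_mul shalf shalf hs0 (by norm_num)
    _ = 1/4 := by norm_num
  have ht2le : t^2 ≤ 1/3 := by
    have hp : 0 ≤ t^2 * (1/4 - s^2) :=
      mul_nonneg (sq_nonneg t) (by linarith)
    nlinarith [hp, ht2, hs214]
  have h33 : Real.sqrt 3 ^ 2 = 3 := Real.sq_sqrt (by norm_num)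
  have hθcos : Real.cos (θ μ) ^ 2 = 1 - 3 * t^2 := by
    rw [hθ μ, Real.cos_arcsin, ← htdef, Real.sq_sqrt (by nlinarith [ht2le, h33, sq_nonneg t]), mul_pow, h33]
  have hμs : μ = 3*s - 4*s^3 := by
    have h3B : Real.sin (3 * B) = 3 * Real.sin B - 4 * Real.sin B ^ 3 :=
      Real.sin_three_mul B
    have hBA : 3 * B = Real.arcsin μ := by rw [hB]; ring
    rw [hBA, Real.sin_arcsin (by linarith) hμ1] at h3B
    rw [h3B]
  -- key equivalence 1: equation ↔ s² = 1 - (3/2) l₃²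
  have key : (1 - 2 * l₃ ^ 2 + (1 / 2) * Real.cos (θ μ) ^ 2 * l₃ ^ 2 = 0) ↔
      s^2 = 1 - 3/2 * l₃^2 := by
    rw [hθcos]
    constructor
    · intro h
      linear_combination (-(1 - s^2)) * h + (-(3*l₃^2/2)) * ht2
    · intro h
      linear_combination (-1) * ht2 + (-1 - t^2) * h
  rw [key]
  constructor
  · intro hss
    have hμval : μ = s * (6*l₃^2 - 1) := by linear_combination hμs + (-4*s) * hss
    have hμ2eq : μ^2 = 1 - μbar^2 := by
      linear_combination (μ + s*(6*l₃^2 - 1)) * hμval + ((6*l₃^2 - 1)^2) * hss + hμsq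
    rw [← hμ2eq, Real.sqrt_sq hμ0]
  · intro hμeq
    have hμ2eq : μ^2 = 1 - μbar^2 := by
      rw [hμeq, Real.sq_sqrt (by linarith)]
    have heq : s^2 * (3 - 4*s^2)^2 = (1 - 3/2*l₃^2) * (3 - 4*(1 - 3/2*l₃^2))^2 := by
      linear_combination (-(μ + 3*s - 4*s^3)) * hμs + hμ2eq - hμsq
    have hv0 : (0:ℝ) ≤ 1 - 3/2*l₃^2 := by linarith
    have hv4 : 1 - 3/2*l₃^2 ≤ 1/4 := by linarith
    rcases lt_trichotomy (s^2) (1 - 3/2*l₃^2) with h | h | h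
    · exact absurd heq (ne_of_lt (gmono _ _ (sq_nonneg s) hv4 h))
    · linarith [h]
    · exact absurd heq.symm (ne_of_lt (gmono _ _ hv0 (by linarith) h))
end

section
/- Let λ₁ > λ₂ > λ₃ be real numbers with λ₁ + λ₂ + λ₃ = 0 and λ₁² + λ₂² + λ₃² = 1, and let D = diag(λ₁, λ₂, λ₃). Then for every unit vector v ∈ ℝ³ one has 1/2 − vᵀ D² v + (1/4)·(vᵀ D v)² ≥ 0 (the complex domain for mode 0 is empty), and the vector v* = (√((λ₁−λ₂)/(λ₁−λ₃)), 0, √((λ₂−λ₃)/(λ₁−λ₃))) is a unit vector for which equality holds: 1/2 − v*ᵀ D² v* + (1/4)·(v*ᵀ D v*)² = 0, as are the vectors obtained from v* by arbitrary sign changes of its coordinates. -/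
open Matrix Real

lemma key_id (l₁ l₂ l₃ a b c : ℝ)
    (hsum : l₁ + l₂ + l₃ = 0) (hsq : l₁ ^ 2 + l₂ ^ 2 + l₃ ^ 2 = 1)
    (habc : a + b + c = 1) :
    1 / 2 - (l₁^2 * a + l₂^2 * b + l₃^2 * c)
      + (1/4) * (l₁ * a + l₂ * b + l₃ * c)^2
      = (1/4) * ((l₁-l₂)*a - (l₂-l₃)*c - (l₁-l₃))^2 - (l₁-l₃)*(l₂-l₃)*c := by
  have hb' : b = 1 - a - c := by linarith
  subst hb'
  have h3 : l₃ = -l₁ - l₂ := by linarith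
  subst h3
  linear_combination (-1/2) * hsq

lemma key_ineq (l₁ l₂ l₃ a b c : ℝ)
    (h12 : l₁ > l₂) (h23 : l₂ > l₃)
    (hsum : l₁ + l₂ + l₃ = 0) (hsq : l₁ ^ 2 + l₂ ^ 2 + l₃ ^ 2 = 1)
    (ha : 0 ≤ a) (hb : 0 ≤ b) (hc : 0 ≤ c) (habc : a + b + c = 1) :
    1 / 2 - (l₁^2 * a + l₂^2 * b + l₃^2 * c)
      + (1/4) * (l₁ * a + l₂ * b + l₃ * c)^2 ≥ 0 := by
  rw [key_id l₁ l₂ l₃ a b c hsum hsq habc]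
  have hdec : (1/4) * ((l₁-l₂)*a - (l₂-l₃)*c - (l₁-l₃))^2 - (l₁-l₃)*(l₂-l₃)*c
      = (1/4)*((l₂-l₃) - (l₁-l₃)*c)^2 + (1/2)*((l₁-l₂)*b)*((l₂-l₃)+(l₁-l₃)*c)
        + (1/4)*((l₁-l₂)*b)^2 := by
    have hb' : b = 1 - a - c := by linarith
    subst hb'
    ring
  rw [hdec]
  have h3 : (0:ℝ) ≤ (l₁-l₂)*b*((l₂-l₃)+(l₁-l₃)*c) := by
    apply mul_nonneg (mul_nonneg (by linarith) hb)
    have : 0 ≤ (l₁-l₃)*c := mul_nonneg (by linarith) hc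
    linarith
  nlinarith [sq_nonneg ((l₂-l₃) - (l₁-l₃)*c), sq_nonneg ((l₁-l₂)*b), h3]

theorem stmt6 (l₁ l₂ l₃ : ℝ)
    (h12 : l₁ > l₂) (h23 : l₂ > l₃)
    (hsum : l₁ + l₂ + l₃ = 0) (hsq : l₁ ^ 2 + l₂ ^ 2 + l₃ ^ 2 = 1)
    (D : Matrix (Fin 3) (Fin 3) ℝ) (hD : D = Matrix.diagonal ![l₁, l₂, l₃])
    (f : (Fin 3 → ℝ) → ℝ)
    (hf : ∀ v : Fin 3 → ℝ,
      f v = 1 / 2 - v ⬝ᵥ (D * D).mulVec v + (1 / 4) * (v ⬝ᵥ D.mulVec v) ^ 2) :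
    (∀ v : Fin 3 → ℝ, v ⬝ᵥ v = 1 → f v ≥ 0) ∧
    (∀ ε η : ℝ, (ε = -1 ∨ ε = 1) → (η = -1 ∨ η = 1) →
      ∀ w : Fin 3 → ℝ,
        w = ![ε * Real.sqrt ((l₁ - l₂) / (l₁ - l₃)), 0,
              η * Real.sqrt ((l₂ - l₃) / (l₁ - l₃))] →
        w ⬝ᵥ w = 1 ∧ f w = 0) := by
  subst hD
  have e1 : ∀ v : Fin 3 → ℝ, v ⬝ᵥ (Matrix.diagonal ![l₁, l₂, l₃] * Matrix.diagonal ![l₁, l₂, l₃]).mulVec v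
      = l₁^2 * (v 0)^2 + l₂^2 * (v 1)^2 + l₃^2 * (v 2)^2 := by
    intro v
    simp [Matrix.diagonal_mul_diagonal, Matrix.mulVec_diagonal, dotProduct, Fin.sum_univ_three]
    ring
  have e2 : ∀ v : Fin 3 → ℝ, v ⬝ᵥ (Matrix.diagonal ![l₁, l₂, l₃]).mulVec v
      = l₁ * (v 0)^2 + l₂ * (v 1)^2 + l₃ * (v 2)^2 := by
    intro v
    simp [Matrix.mulVec_diagonal, dotProduct, Fin.sum_univ_three]
    ring
  have e3 : ∀ v : Fin 3 → ℝ, v ⬝ᵥ v = (v 0)^2 + (v 1)^2 + (v 2)^2 := by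
    intro v
    simp [dotProduct, Fin.sum_univ_three]
    ring
  have ff : ∀ v : Fin 3 → ℝ, f v = 1 / 2 - (l₁^2 * (v 0)^2 + l₂^2 * (v 1)^2 + l₃^2 * (v 2)^2)
      + (1/4) * (l₁ * (v 0)^2 + l₂ * (v 1)^2 + l₃ * (v 2)^2)^2 := by
    intro v; rw [hf v, e1 v, e2 v]
  constructor
  · intro v hv
    rw [ff v]
    exact key_ineq l₁ l₂ l₃ _ _ _ h12 h23 hsum hsq (sq_nonneg _) (sq_nonneg _) (sq_nonneg _)
      (by rw [e3 v] at hv; linarith)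
  · intro ε η hε hη w hw
    have hd : (0:ℝ) < l₁ - l₃ := by linarith
    have ha0 : (0:ℝ) ≤ (l₁ - l₂) / (l₁ - l₃) := div_nonneg (by linarith) hd.le
    have hc0 : (0:ℝ) ≤ (l₂ - l₃) / (l₁ - l₃) := div_nonneg (by linarith) hd.le
    have hε2 : ε^2 = 1 := by rcases hε with h | h <;> simp [h]
    have hη2 : η^2 = 1 := by rcases hη with h | h <;> simp [h]
    have hw0 : (w 0)^2 = (l₁ - l₂) / (l₁ - l₃) := by
      rw [hw]; show (ε * Real.sqrt ((l₁ - l₂) / (l₁ - l₃)))^2 = _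
      rw [mul_pow, hε2, one_mul, Real.sq_sqrt ha0]
    have hw1 : (w 1)^2 = 0 := by rw [hw]; norm_num
    have hw2 : (w 2)^2 = (l₂ - l₃) / (l₁ - l₃) := by
      rw [hw]; show (η * Real.sqrt ((l₂ - l₃) / (l₁ - l₃)))^2 = _
      rw [mul_pow, hη2, one_mul, Real.sq_sqrt hc0]
    have habc : (w 0)^2 + (w 1)^2 + (w 2)^2 = 1 := by
      rw [hw0, hw1, hw2]; field_simp; ring
    constructor
    · rw [e3 w]; exact habc
    · rw [ff w, key_id l₁ l₂ l₃ _ _ _ hsum hsq habc, hw0, hw2]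
      field_simp
      ring
end

section
/- Let λ₁ ≥ λ₂ ≥ λ₃ be real numbers with λ₁ + λ₂ + λ₃ = 0 and λ₁² + λ₂² + λ₃² = 1, and set μ = 3√6 · λ₁λ₂λ₃. Then λ₁ > λ₃, and: (i) λ₁ + λ₃ − 2λ₂ = −3λ₂ = √6 · sin((1/3)·arcsin μ); (ii) λ₁ − λ₃ = √(2 − 3λ₂²) = √2 · cos((1/3)·arcsin μ); (iii) (λ₁ + λ₃ − 2λ₂)/(λ₁ − λ₃) = √3 · tan((1/3)·arcsin μ). -/
open Real

set_option maxHeartbeats 1000000 in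
theorem stmt8 (l₁ l₂ l₃ : ℝ)
    (h12 : l₁ ≥ l₂) (h23 : l₂ ≥ l₃)
    (hsum : l₁ + l₂ + l₃ = 0) (hsq : l₁ ^ 2 + l₂ ^ 2 + l₃ ^ 2 = 1)
    (μ : ℝ) (hμ : μ = 3 * Real.sqrt 6 * (l₁ * l₂ * l₃)) :
    l₁ > l₃ ∧
    l₁ + l₃ - 2 * l₂ = -3 * l₂ ∧
    -3 * l₂ = Real.sqrt 6 * Real.sin ((1 / 3) * Real.arcsin μ) ∧
    l₁ - l₃ = Real.sqrt (2 - 3 * l₂ ^ 2) ∧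
    l₁ - l₃ = Real.sqrt 2 * Real.cos ((1 / 3) * Real.arcsin μ) ∧
    (l₁ + l₃ - 2 * l₂) / (l₁ - l₃) = Real.sqrt 3 * Real.tan ((1 / 3) * Real.arcsin μ) := by
  have h6 : Real.sqrt 6 ^ 2 = 6 := Real.sq_sqrt (by norm_num)
  have h6pos : (0:ℝ) < Real.sqrt 6 := Real.sqrt_pos.2 (by norm_num)
  set s : ℝ := -(Real.sqrt 6 / 2) * l₂ with hs
  have hb : l₂ ^ 2 ≤ 1/6 := by
    nlinarith [mul_nonneg (sub_nonneg.2 h12) (sub_nonneg.2 h23)]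
  have hprod : l₁ * l₃ = l₂ ^ 2 - 1/2 := by
    linear_combination (l₁ + l₃ - l₂) * hsum / 2 - hsq / 2
  have hs2 : s ^ 2 ≤ 1/4 := by
    have : s ^ 2 = 6/4 * l₂ ^ 2 := by rw [hs]; nlinarith [h6]
    nlinarith
  have hs_le : |s| ≤ 1/2 := by
    rw [abs_le]
    constructor
    · nlinarith [sq_nonneg (s + 1/2)]
    · nlinarith [sq_nonneg (s - 1/2)]
  have hs1 : -1 ≤ s := by nlinarith [abs_le.1 hs_le]
  have hs1' : s ≤ 1 := by nlinarith [abs_le.1 hs_le]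
  set t : ℝ := Real.arcsin s with ht
  have hsint : Real.sin t = s := Real.sin_arcsin hs1 hs1'
  have hpi6 : Real.arcsin (1/2 : ℝ) = π/6 := by
    rw [← Real.sin_pi_div_six]
    exact Real.arcsin_sin (by linarith [Real.pi_pos]) (by linarith [Real.pi_pos])
  have htub : t ≤ π/6 := by
    rw [← hpi6]
    exact Real.monotone_arcsin (abs_le.1 hs_le).2
  have htlb : -(π/6) ≤ t := by
    have : Real.arcsin (-(1/2) : ℝ) ≤ t :=
      Real.monotone_arcsin (abs_le.1 hs_le).1
    rwa [Real.arcsin_neg, hpi6] at this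
  have hsin3 : Real.sin (3 * t) = μ := by
    rw [Real.sin_three_mul, hsint, hμ, hs]
    linear_combination (-3 * Real.sqrt 6 * l₂) * hprod + (Real.sqrt 6 / 2 * l₂^3) * h6
  have harcsin : Real.arcsin μ = 3 * t := by
    rw [← hsin3]
    exact Real.arcsin_sin (by linarith) (by linarith)
  have hθ : (1/3 : ℝ) * Real.arcsin μ = t := by rw [harcsin]; ring
  rw [hθ]
  -- basic facts
  have hsq13 : (l₁ - l₃) ^ 2 = 2 - 3 * l₂ ^ 2 := by
    linear_combination (l₁ + l₃ - l₂) * hsum - 4 * hprod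
  have hge : l₁ - l₃ ≥ 0 := by linarith
  have hgt : l₁ > l₃ := by
    have h32 : (l₁ - l₃) ^ 2 ≥ 3/2 := by linarith
    nlinarith [h32, hge]
  have hsqrt13 : l₁ - l₃ = Real.sqrt (2 - 3 * l₂ ^ 2) := by
    rw [← hsq13, Real.sqrt_sq hge]
  have hsin6 : -3 * l₂ = Real.sqrt 6 * Real.sin t := by
    rw [hsint, hs]
    linear_combination (l₂/2) * h6
  have hcos : Real.cos t = Real.sqrt (1 - s ^ 2) := Real.cos_arcsin s
  have hcos2 : l₁ - l₃ = Real.sqrt 2 * Real.cos t := by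
    rw [hcos]
    have h1s : 1 - s ^ 2 = 1 - 3/2 * l₂ ^ 2 := by
      rw [hs]; linear_combination (-l₂^2/4) * h6
    rw [h1s, ← Real.sqrt_mul (by norm_num : (0:ℝ) ≤ 2)]
    rw [show 2 * (1 - 3/2 * l₂ ^ 2) = 2 - 3 * l₂ ^ 2 by ring]
    exact hsqrt13
  have hcospos : Real.cos t > 0 := by
    nlinarith [Real.sqrt_nonneg 2, Real.sq_sqrt (by norm_num : (0:ℝ) ≤ 2)]
  refine ⟨hgt, by linarith, hsin6, hsqrt13, hcos2, ?_⟩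
  have h236 : Real.sqrt 2 * Real.sqrt 3 = Real.sqrt 6 := by
    rw [← Real.sqrt_mul (by norm_num : (0:ℝ) ≤ 2)]; norm_num
  rw [Real.tan_eq_sin_div_cos]
  have hne : l₁ - l₃ ≠ 0 := by linarith
  field_simp
  linear_combination Real.cos t * hsin6 - Real.sqrt 3 * Real.sin t * hcos2 -
    Real.sin t * Real.cos t * h236 + Real.cos t * hsum
end

section
/- Let λ₁ > λ₂ > λ₃ be real numbers with λ₁ + λ₂ + λ₃ = 0, λ₁² + λ₂² + λ₃² = 1, and μ := 3√6 · λ₁λ₂λ₃ ∈ (0,1); set θ = arcsin(√3 · tan((1/3)·arcsin μ)). Let v₁, v₂, v₃ be an orthonormal basis of ℝ³, and let T̄ be a 3×3 real symmetric matrix with trace(T̄) = 0 and trace(T̄ · (λ₁ v₁v₁ᵀ + λ₂ v₂v₂ᵀ + λ₃ v₃v₃ᵀ)) = 0. Let S be the 2×2 symmetric matrix with S₁₁ = v₃ᵀ T̄ v₃, S₁₂ = S₂₁ = v₃ᵀ T̄ v₁, S₂₂ = v₁ᵀ T̄ v₁ (the matrix of T̄ restricted to the plane normal to v₂ in the ordered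 basis (v₃, v₁)). Then the vector (0,1)ᵀ, which represents the major eigenvector v₁, is an eigenvector of A = R_{θ/2+π/4} · S · R_{θ/2−π/4}; equivalently, the (1,2) entry of A vanishes. -/
open Matrix Real

set_option maxHeartbeats 1000000 in
lemma stmt10_aux (l₁ l₂ l₃ : ℝ)
    (h12 : l₁ > l₂) (h23 : l₂ > l₃)
    (hsum : l₁ + l₂ + l₃ = 0) (hsq : l₁ ^ 2 + l₂ ^ 2 + l₃ ^ 2 = 1)
    (μ : ℝ) (hμ : μ = 3 * Real.sqrt 6 * (l₁ * l₂ * l₃))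
    (hμpos : 0 < μ) (hμlt : μ < 1)
    (θ : ℝ) (hθ : θ = Real.arcsin (Real.sqrt 3 * Real.tan ((1 / 3) * Real.arcsin μ))) :
    Real.sin θ = 3 * (-l₂) / (l₁ - l₃) := by
  have h6 : (0:ℝ) < Real.sqrt 6 := Real.sqrt_pos.mpr (by norm_num)
  have hs6 : Real.sqrt 6 ^ 2 = 6 := Real.sq_sqrt (by norm_num)
  have hs3 : Real.sqrt 3 ^ 2 = 3 := Real.sq_sqrt (by norm_num)
  have hs2 : Real.sqrt 2 ^ 2 = 2 := Real.sq_sqrt (by norm_num)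
  have h3pos : (0:ℝ) < Real.sqrt 3 := Real.sqrt_pos.mpr (by norm_num)
  have h2pos : (0:ℝ) < Real.sqrt 2 := Real.sqrt_pos.mpr (by norm_num)
  -- sign facts
  have hl1pos : 0 < l₁ := by nlinarith
  have hl3neg : l₃ < 0 := by nlinarith
  have hprod : 0 < l₁ * l₂ * l₃ := by
    have h := hμpos
    rw [hμ] at h
    nlinarith [h6]
  have hl2neg : l₂ < 0 := by nlinarith [mul_pos hl1pos (neg_pos.mpr hl3neg)]
  have hl2sq : l₂ ^ 2 < 1 / 6 := by nlinarith [mul_pos (sub_pos.mpr h12) (sub_pos.mpr h23)]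
  have hl13 : l₁ * l₃ = l₂ ^ 2 - 1 / 2 := by
    linear_combination ((l₁+l₃-l₂)/2) * hsum - (1/2) * hsq
  set d : ℝ := l₁ - l₃ with hd_def
  have hd : 0 < d := by simp only [hd_def]; linarith
  have hd2 : d ^ 2 = 2 - 3 * l₂ ^ 2 := by
    simp only [hd_def]; linear_combination hsq - 2 * hl13
  -- s = sin of one third arcsin μ
  set s : ℝ := Real.sqrt 6 / 2 * (-l₂) with hs_def
  have hs_pos : 0 < s := by
    rw [hs_def]
    exact mul_pos (by positivity) (by linarith)
  have hs_lt : s < 1 / 2 := by nlinarith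
  have harcsin_s_nonneg : 0 ≤ Real.arcsin s := Real.arcsin_nonneg.mpr hs_pos.le
  have harcsin_s_le : Real.arcsin s ≤ π / 6 := by
    have h1 : Real.arcsin s ≤ Real.arcsin (1/2) := Real.monotone_arcsin hs_lt.le
    have h2 : Real.arcsin (1/2 : ℝ) = π / 6 := by
      rw [show (1/2 : ℝ) = Real.sin (π/6) from (Real.sin_pi_div_six).symm]
      exact Real.arcsin_sin (by linarith [Real.pi_pos]) (by linarith [Real.pi_pos])
    linarith
  have hpi := Real.pi_pos
  have hsin3 : Real.sin (3 * Real.arcsin s) = μ := by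
    rw [Real.sin_three_mul, Real.sin_arcsin (by linarith) (by linarith)]
    rw [hμ, hs_def]
    linear_combination (-3 * Real.sqrt 6 * l₂) * hl13 + (Real.sqrt 6 * l₂^3 / 2) * hs6
  have harc : Real.arcsin μ = 3 * Real.arcsin s := by
    rw [← hsin3, Real.arcsin_sin (by linarith) (by linarith)]
  -- the target sine value
  set t : ℝ := 3 * (-l₂) / d with ht_def
  have ht_pos : 0 < t := div_pos (by linarith) hd
  have ht_lt : t < 1 := by
    rw [ht_def, div_lt_one hd]
    nlinarith [hd2, hl2sq, hd, hl2neg]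
  have htan : Real.sqrt 3 * Real.tan ((1 / 3) * Real.arcsin μ) = t := by
    rw [harc, show (1/3 : ℝ) * (3 * Real.arcsin s) = Real.arcsin s by ring,
      Real.tan_arcsin]
    have h1s : 1 - s ^ 2 = d ^ 2 / 2 := by
      rw [hd2, hs_def]; linear_combination (-l₂^2/4) * hs6
    rw [h1s, show d^2/2 = (d / Real.sqrt 2)^2 by rw [div_pow, hs2],
      Real.sqrt_sq (le_of_lt (div_pos hd h2pos))]
    have h32 : Real.sqrt 3 * Real.sqrt 2 = Real.sqrt 6 := by
      rw [← Real.sqrt_mul (by norm_num)]; norm_num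
    have hd' : d ≠ 0 := ne_of_gt hd
    have h2' : Real.sqrt 2 ≠ 0 := ne_of_gt h2pos
    have h63 : Real.sqrt 6 * s = 3 * (-l₂) := by
      rw [hs_def]; linear_combination (-l₂/2) * hs6
    calc Real.sqrt 3 * (s / (d / Real.sqrt 2))
        = (Real.sqrt 3 * Real.sqrt 2 * s) / d := by field_simp
      _ = (Real.sqrt 6 * s) / d := by rw [h32]
      _ = t := by rw [h63, ht_def]
  rw [hθ, htan, Real.sin_arcsin (by linarith) ht_lt.le]

set_option maxHeartbeats 1000000 in
theorem stmt10 (l₁ l₂ l₃ : ℝ)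
    (h12 : l₁ > l₂) (h23 : l₂ > l₃)
    (hsum : l₁ + l₂ + l₃ = 0) (hsq : l₁ ^ 2 + l₂ ^ 2 + l₃ ^ 2 = 1)
    (μ : ℝ) (hμ : μ = 3 * Real.sqrt 6 * (l₁ * l₂ * l₃))
    (hμpos : 0 < μ) (hμlt : μ < 1)
    (θ : ℝ) (hθ : θ = Real.arcsin (Real.sqrt 3 * Real.tan ((1 / 3) * Real.arcsin μ)))
    (v₁ v₂ v₃ : Fin 3 → ℝ)
    (h11 : v₁ ⬝ᵥ v₁ = 1) (h22 : v₂ ⬝ᵥ v₂ = 1) (h33 : v₃ ⬝ᵥ v₃ = 1)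
    (hv12 : v₁ ⬝ᵥ v₂ = 0) (hv13 : v₁ ⬝ᵥ v₃ = 0) (hv23 : v₂ ⬝ᵥ v₃ = 0)
    (T : Matrix (Fin 3) (Fin 3) ℝ) (hsymm : T.IsSymm) (htr : T.trace = 0)
    (horth : Matrix.trace (T * (l₁ • Matrix.vecMulVec v₁ v₁
      + l₂ • Matrix.vecMulVec v₂ v₂ + l₃ • Matrix.vecMulVec v₃ v₃)) = 0)
    (S : Matrix (Fin 2) (Fin 2) ℝ)
    (hS : S = !![v₃ ⬝ᵥ T.mulVec v₃, v₃ ⬝ᵥ T.mulVec v₁;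
                 v₃ ⬝ᵥ T.mulVec v₁, v₁ ⬝ᵥ T.mulVec v₁])
    (A : Matrix (Fin 2) (Fin 2) ℝ)
    (hA : A = rot (θ / 2 + π / 4) * S * rot (θ / 2 - π / 4)) :
    (∃ c : ℝ, A.mulVec ![0, 1] = c • ![0, 1]) ∧ A 0 1 = 0 := by
  have hd : (0:ℝ) < l₁ - l₃ := by linarith
  have hsinθ : Real.sin θ = 3 * (-l₂) / (l₁ - l₃) :=
    stmt10_aux l₁ l₂ l₃ h12 h23 hsum hsq μ hμ hμpos hμlt θ hθ
  have hs2 : Real.sqrt 2 ^ 2 = 2 := Real.sq_sqrt (by norm_num)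
  -- linear algebra: diagonal entries in the eigenbasis
  set a : ℝ := v₁ ⬝ᵥ T.mulVec v₁ with ha_def
  set b : ℝ := v₂ ⬝ᵥ T.mulVec v₂ with hb_def
  set c : ℝ := v₃ ⬝ᵥ T.mulVec v₃ with hc_def
  set P : Matrix (Fin 3) (Fin 3) ℝ := Matrix.of ![v₁, v₂, v₃] with hP_def
  have hPPt : P * Pᵀ = 1 := by
    simp only [dotProduct, Fin.sum_univ_three] at h11 h22 h33 hv12 hv13 hv23
    ext i j
    fin_cases i <;> fin_cases j <;>
      simp [hP_def, Matrix.mul_apply, Matrix.transpose_apply, Matrix.of_apply,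
        Fin.sum_univ_three, Matrix.one_apply, Matrix.vecHead, Matrix.vecTail] <;>
      linarith
  have hPtP : Pᵀ * P = 1 := mul_eq_one_comm.mp hPPt
  have htrace : a + b + c = 0 := by
    have h1 : (P * T * Pᵀ).trace = T.trace := by
      rw [Matrix.trace_mul_comm, ← Matrix.mul_assoc, hPtP, Matrix.one_mul]
    rw [htr] at h1
    rw [← h1]
    simp only [ha_def, hb_def, hc_def, Matrix.trace, Matrix.diag, Matrix.mul_apply,
      dotProduct, Matrix.mulVec, Fin.sum_univ_three, hP_def, Matrix.of_apply]
    simp [Fin.sum_univ_three]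
    ring
  have horth' : l₁ * a + l₂ * b + l₃ * c = 0 := by
    rw [← horth]
    simp only [ha_def, hb_def, hc_def, Matrix.trace, Matrix.diag, Matrix.mul_apply,
      Matrix.add_apply, Matrix.smul_apply, Matrix.vecMulVec_apply, dotProduct,
      Matrix.mulVec, Fin.sum_univ_three, smul_eq_mul]
    ring
  -- key relation
  have hkey : c - a = Real.sin θ * (a + c) := by
    have h1 : (l₁ - l₃) * (c - a) = 3 * (-l₂) * (a + c) := by
      linear_combination (a + c) * hsum + 2 * l₂ * htrace - 2 * horth'
    have h2 : (l₁ - l₃) * (c - a) = (l₁ - l₃) * (Real.sin θ * (a + c)) := by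
      have h3 : (l₁ - l₃) * (3 * -l₂ / (l₁ - l₃) * (a + c)) = 3 * -l₂ * (a + c) := by
        field_simp
      rw [hsinθ, h3, h1]
    exact mul_left_cancel₀ (ne_of_gt hd) h2
  -- compute A 0 1
  have hhalf : Real.sin (θ/2) ^ 2 + Real.cos (θ/2) ^ 2 = 1 := Real.sin_sq_add_cos_sq _
  have hdouble : Real.sin θ = 2 * Real.sin (θ/2) * Real.cos (θ/2) := by
    rw [show θ = 2 * (θ/2) by ring, Real.sin_two_mul]
    ring_nf
  have hA01 : A 0 1 = 0 := by
    rw [hA, hS]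
    have e1 : Real.cos (θ/2 + π/4)
        = (Real.cos (θ/2) - Real.sin (θ/2)) * (Real.sqrt 2 / 2) := by
      rw [Real.cos_add, Real.cos_pi_div_four, Real.sin_pi_div_four]; ring
    have e2 : Real.sin (θ/2 + π/4)
        = (Real.cos (θ/2) + Real.sin (θ/2)) * (Real.sqrt 2 / 2) := by
      rw [Real.sin_add, Real.cos_pi_div_four, Real.sin_pi_div_four]; ring
    have e3 : Real.cos (θ/2 - π/4)
        = (Real.cos (θ/2) + Real.sin (θ/2)) * (Real.sqrt 2 / 2) := by
      rw [Real.cos_sub, Real.cos_pi_div_four, Real.sin_pi_div_four]; ring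
    have e4 : Real.sin (θ/2 - π/4)
        = (Real.sin (θ/2) - Real.cos (θ/2)) * (Real.sqrt 2 / 2) := by
      rw [Real.sin_sub, Real.cos_pi_div_four, Real.sin_pi_div_four]; ring
    rw [hdouble] at hkey
    simp only [rot, Matrix.mul_apply, Fin.sum_univ_two, Matrix.of_apply, Matrix.cons_val',
      Matrix.cons_val_zero, Matrix.cons_val_one, Matrix.head_cons, Matrix.empty_val',
      Matrix.cons_val_fin_one, Matrix.head_fin_const]
    rw [e1, e2, e3, e4]
    linear_combination ((Real.sqrt 2/2)^2 * (Real.cos (θ/2)^2 + Real.sin (θ/2)^2)) * hkey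
      + ((Real.sqrt 2/2)^2 * 2 * Real.sin (θ/2) * Real.cos (θ/2) * (a + c)) * hhalf
  refine ⟨⟨A 1 1, ?_⟩, hA01⟩
  funext i
  fin_cases i <;> simp [Matrix.mulVec, dotProduct, Fin.sum_univ_two, hA01]
end

section
/- Let λ₁ > λ₂ > λ₃ be real numbers with λ₁ + λ₂ + λ₃ = 0, λ₁² + λ₂² + λ₃² = 1, and 3√6 · λ₁λ₂λ₃ ∈ (−1,0); set μ = −3√6 · λ₁λ₂λ₃ ∈ (0,1) and θ = arcsin(√3 · tan((1/3)·arcsin μ)). Let v₁, v₂, v₃ be an orthonormal basis of ℝ³, and let T̄ be a 3×3 real symmetric matrix with trace(T̄) = 0 and trace(T̄ · (λ₁ v₁v₁ᵀ + λ₂ v₂v₂ᵀ + λ₃ v₃v₃ᵀ)) = 0. Let S be the 2×2 symmetric matrix with S₁₁ = v₁ᵀ T̄ v₁, S₁₂ = S₂₁ = v₁ᵀ T̄ v₃, S₂₂ = v₃ᵀ T̄ v₃ (the matrix of T̄ restricted to the plane normal to v₂ in the ordered basis (v₁, v₃)). Then the vector (0,1)ᵀ, which represents the minor eigenvector v₃,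 is an eigenvector of A = R_{θ/2+π/4} · S · R_{θ/2−π/4}; equivalently, the (1,2) entry of A vanishes. -/
open Matrix Real

set_option maxHeartbeats 1000000 in
theorem stmt11 (l₁ l₂ l₃ : ℝ)
    (h12 : l₁ > l₂) (h23 : l₂ > l₃)
    (hsum : l₁ + l₂ + l₃ = 0) (hsq : l₁ ^ 2 + l₂ ^ 2 + l₃ ^ 2 = 1)
    (hmodeneg : -1 < 3 * Real.sqrt 6 * (l₁ * l₂ * l₃))
    (hmodeneg' : 3 * Real.sqrt 6 * (l₁ * l₂ * l₃) < 0)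
    (μ : ℝ) (hμ : μ = -(3 * Real.sqrt 6 * (l₁ * l₂ * l₃)))
    (θ : ℝ) (hθ : θ = Real.arcsin (Real.sqrt 3 * Real.tan ((1 / 3) * Real.arcsin μ)))
    (v₁ v₂ v₃ : Fin 3 → ℝ)
    (h11 : v₁ ⬝ᵥ v₁ = 1) (h22 : v₂ ⬝ᵥ v₂ = 1) (h33 : v₃ ⬝ᵥ v₃ = 1)
    (hv12 : v₁ ⬝ᵥ v₂ = 0) (hv13 : v₁ ⬝ᵥ v₃ = 0) (hv23 : v₂ ⬝ᵥ v₃ = 0)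
    (T : Matrix (Fin 3) (Fin 3) ℝ) (hsymm : T.IsSymm) (htr : T.trace = 0)
    (horth : Matrix.trace (T * (l₁ • Matrix.vecMulVec v₁ v₁
      + l₂ • Matrix.vecMulVec v₂ v₂ + l₃ • Matrix.vecMulVec v₃ v₃)) = 0)
    (S : Matrix (Fin 2) (Fin 2) ℝ)
    (hS : S = !![v₁ ⬝ᵥ T.mulVec v₁, v₁ ⬝ᵥ T.mulVec v₃;
                 v₁ ⬝ᵥ T.mulVec v₃, v₃ ⬝ᵥ T.mulVec v₃])
    (A : Matrix (Fin 2) (Fin 2) ℝ)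
    (hA : A = rot (θ / 2 + π / 4) * S * rot (θ / 2 - π / 4)) :
    (∃ c : ℝ, A.mulVec ![0, 1] = c • ![0, 1]) ∧ A 0 1 = 0 := by
  -- basic sign facts
  have h6 : (0:ℝ) < Real.sqrt 6 := Real.sqrt_pos.mpr (by norm_num)
  have hs6 : Real.sqrt 6 ^ 2 = 6 := Real.sq_sqrt (by norm_num)
  have hl1 : 0 < l₁ := by nlinarith
  have hl3 : l₃ < 0 := by nlinarith
  have hprod : l₁ * l₂ * l₃ < 0 := by nlinarith
  have hl2 : 0 < l₂ := by nlinarith [mul_neg_of_pos_of_neg hl1 hl3]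
  have hDpos : 0 < l₁ - l₃ := by linarith
  have hD2 : (l₁ - l₃) ^ 2 = 2 - 3 * l₂ ^ 2 := by
    linear_combination (l₂ - l₁ - l₃) * hsum + 2 * hsq
  have hl13 : l₁ * l₃ = l₂ ^ 2 - 1 / 2 := by
    linear_combination ((l₁ + l₃ - l₂) / 2) * hsum - (1 / 2) * hsq
  have hl2lt : 3 * l₂ < l₁ - l₃ := by linarith
  have hm2 : 6 * l₂ ^ 2 < 1 := by nlinarith
  -- the angle x = arcsin(√6/2 · l₂)
  set m : ℝ := Real.sqrt 6 / 2 * l₂ with hm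
  have hmpos : 0 < m := by positivity
  have hmsq : m ^ 2 < 1 / 4 := by
    have : m ^ 2 = 6 / 4 * l₂ ^ 2 := by
      rw [hm, mul_pow, div_pow, hs6]; norm_num
    nlinarith
  have hmlt : m < 1 / 2 := by nlinarith
  set x : ℝ := Real.arcsin m with hx
  have hsinx : Real.sin x = m := Real.sin_arcsin (by linarith) (by linarith)
  have hxpos : 0 ≤ x := Real.arcsin_nonneg.mpr hmpos.le
  have hx6 : x ≤ π / 6 := by
    have h1 : x ≤ Real.arcsin (1/2) := Real.monotone_arcsin hmlt.le
    have h2 : Real.arcsin (1/2) = π / 6 := by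
      rw [← Real.sin_pi_div_six, Real.arcsin_sin] <;> linarith [Real.pi_pos]
    linarith
  have hcosx : Real.cos x = (l₁ - l₃) / Real.sqrt 2 := by
    have h2 : (0:ℝ) < Real.sqrt 2 := Real.sqrt_pos.mpr (by norm_num)
    have hs2 : Real.sqrt 2 ^ 2 = 2 := Real.sq_sqrt (by norm_num)
    have heq : 1 - m ^ 2 = ((l₁ - l₃) / Real.sqrt 2) ^ 2 := by
      rw [div_pow, hs2, hm, mul_pow, div_pow, hs6, hD2]; ring
    rw [hx, Real.cos_arcsin, heq, Real.sqrt_sq (by positivity)]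
  -- sin(3x) = μ
  have hsin3x : Real.sin (3 * x) = μ := by
    rw [Real.sin_three_mul, hsinx, hμ, hm]
    linear_combination 3 * Real.sqrt 6 * l₂ * hl13 - (Real.sqrt 6 * l₂ ^ 3 / 2) * hs6
  have harcsin : Real.arcsin μ = 3 * x := by
    rw [← hsin3x, Real.arcsin_sin] <;> linarith [Real.pi_pos]
  -- tan x and sin θ
  have htan : Real.sqrt 3 * Real.tan x = 3 * l₂ / (l₁ - l₃) := by
    have h362 : Real.sqrt 3 * Real.sqrt 6 * Real.sqrt 2 = 6 := by
      rw [← Real.sqrt_mul (by norm_num), ← Real.sqrt_mul (by norm_num)]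
      rw [show (3:ℝ) * 6 * 2 = 6 ^ 2 by norm_num, Real.sqrt_sq (by norm_num)]
    have hne : l₁ - l₃ ≠ 0 := ne_of_gt hDpos
    have h2ne : Real.sqrt 2 ≠ 0 := by positivity
    rw [Real.tan_eq_sin_div_cos, hsinx, hcosx, hm]
    field_simp
    linear_combination h362
  have hθ' : θ = Real.arcsin (3 * l₂ / (l₁ - l₃)) := by
    rw [hθ, harcsin]
    rw [show (1:ℝ)/3 * (3 * x) = x by ring, htan]
  have hr1 : 3 * l₂ / (l₁ - l₃) ≤ 1 := by
    rw [div_le_one hDpos]; linarith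
  have hr0 : 0 ≤ 3 * l₂ / (l₁ - l₃) := by positivity
  have hsinθ : Real.sin θ * (l₁ - l₃) = 3 * l₂ := by
    rw [hθ', Real.sin_arcsin (by linarith) hr1]
    field_simp
  -- matrix identities
  set a : ℝ := v₁ ⬝ᵥ T.mulVec v₁ with ha
  set b : ℝ := v₁ ⬝ᵥ T.mulVec v₃ with hb
  set d : ℝ := v₃ ⬝ᵥ T.mulVec v₃ with hd
  set e : ℝ := v₂ ⬝ᵥ T.mulVec v₂ with he
  -- completeness relation
  simp only [dotProduct, Fin.sum_univ_three] at h11 h22 h33 hv12 hv13 hv23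
  set Q : Matrix (Fin 3) (Fin 3) ℝ := Matrix.of (fun i j => ![v₁, v₂, v₃] i j) with hQ
  have hQQt : Q * Qᵀ = 1 := by
    ext i j
    fin_cases i <;> fin_cases j <;>
      simp [hQ, Matrix.mul_apply, Matrix.one_apply, Fin.sum_univ_three] <;>
      first
      | linear_combination h11 | linear_combination h22 | linear_combination h33
      | linear_combination hv12 | linear_combination hv13 | linear_combination hv23
  have hQtQ : Qᵀ * Q = 1 := mul_eq_one_comm.mp hQQt
  have hc : ∀ i j : Fin 3, v₁ i * v₁ j + v₂ i * v₂ j + v₃ i * v₃ j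
      = (1 : Matrix (Fin 3) (Fin 3) ℝ) i j := by
    intro i j
    have := congrFun (congrFun hQtQ i) j
    simpa [hQ, Matrix.mul_apply, Fin.sum_univ_three] using this
  have hc00 := hc 0 0; have hc01 := hc 0 1; have hc02 := hc 0 2
  have hc10 := hc 1 0; have hc11 := hc 1 1; have hc12 := hc 1 2
  have hc20 := hc 2 0; have hc21 := hc 2 1; have hc22 := hc 2 2
  simp [Matrix.one_apply] at hc00 hc01 hc02 hc10 hc11 hc12 hc20 hc21 hc22
  have htr' : T 0 0 + T 1 1 + T 2 2 = 0 := by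
    simpa [Matrix.trace, Fin.sum_univ_three] using htr
  have htr3 : a + e + d = 0 := by
    rw [ha, he, hd]
    simp only [dotProduct, Matrix.mulVec, Fin.sum_univ_three]
    linear_combination (T 0 0) * hc00 + (T 0 1) * hc01 + (T 0 2) * hc02
      + (T 1 0) * hc10 + (T 1 1) * hc11 + (T 1 2) * hc12
      + (T 2 0) * hc20 + (T 2 1) * hc21 + (T 2 2) * hc22 + htr'
  have horth' : l₁ * a + l₂ * e + l₃ * d = 0 := by
    rw [ha, he, hd]
    simp only [dotProduct, Matrix.mulVec, Fin.sum_univ_three]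
    have h := horth
    simp only [Matrix.trace, Matrix.diag, Matrix.mul_apply, Matrix.add_apply,
      Matrix.smul_apply, Matrix.vecMulVec_apply, smul_eq_mul,
      Fin.sum_univ_three] at h
    linear_combination h
  have key2 : (l₁ - l₂) * a - (l₂ - l₃) * d = 0 := by
    linear_combination horth' - l₂ * htr3
  -- the key entry computation
  set c2 : ℝ := Real.cos (θ / 2) with hc2
  set s2 : ℝ := Real.sin (θ / 2) with hs2'
  have hpyth : s2 ^ 2 + c2 ^ 2 = 1 := Real.sin_sq_add_cos_sq _
  have hdbl : 2 * s2 * c2 * (l₁ - l₃) = 3 * l₂ := by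
    have : Real.sin θ = 2 * s2 * c2 := by
      rw [hs2', hc2, ← Real.sin_two_mul]; congr 1; ring
    rw [← this]; exact hsinθ
  have hq2 : Real.sqrt 2 ^ 2 = 2 := Real.sq_sqrt (by norm_num)
  have hca : Real.cos (θ / 2 + π / 4) = (c2 - s2) * (Real.sqrt 2 / 2) := by
    rw [Real.cos_add, Real.cos_pi_div_four, Real.sin_pi_div_four]; ring
  have hsa : Real.sin (θ / 2 + π / 4) = (c2 + s2) * (Real.sqrt 2 / 2) := by
    rw [Real.sin_add, Real.cos_pi_div_four, Real.sin_pi_div_four]; ring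
  have hcb : Real.cos (θ / 2 - π / 4) = (c2 + s2) * (Real.sqrt 2 / 2) := by
    rw [Real.cos_sub, Real.cos_pi_div_four, Real.sin_pi_div_four]; ring
  have hsb : Real.sin (θ / 2 - π / 4) = (s2 - c2) * (Real.sqrt 2 / 2) := by
    rw [Real.sin_sub, Real.cos_pi_div_four, Real.sin_pi_div_four]; ring
  have hA01 : A 0 1 = 0 := by
    have hexp : A 0 1 = (Real.cos (θ/2+π/4) * a + (-Real.sin (θ/2+π/4)) * b)
        * (-Real.sin (θ/2-π/4))
        + (Real.cos (θ/2+π/4) * b + (-Real.sin (θ/2+π/4)) * d)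
        * Real.cos (θ/2-π/4) := by
      rw [hA, hS]
      simp [rot, Matrix.mul_apply, Fin.sum_univ_two, ← ha, ← hb, ← hd]
      try ring
    rw [hexp, hca, hsa, hcb, hsb]
    have hmain : ((c2 - s2) * (Real.sqrt 2 / 2) * a + (-((c2 + s2) * (Real.sqrt 2 / 2))) * b)
        * (-((s2 - c2) * (Real.sqrt 2 / 2)))
        + ((c2 - s2) * (Real.sqrt 2 / 2) * b + (-((c2 + s2) * (Real.sqrt 2 / 2))) * d)
        * ((c2 + s2) * (Real.sqrt 2 / 2))
        = (1 - 2 * s2 * c2) / 2 * a - (1 + 2 * s2 * c2) / 2 * d := by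
      linear_combination ((c2 - s2)^2 * a / 4 - (c2+s2)^2 * d / 4) * hq2
        + ((a - d) / 2) * hpyth
    rw [hmain]
    have hfin : ((1 - 2 * s2 * c2) / 2 * a - (1 + 2 * s2 * c2) / 2 * d) * (l₁ - l₃) = 0 := by
      linear_combination key2 - (a + d) / 2 * hdbl - (a + d) / 2 * hsum
    exact (mul_eq_zero.mp hfin).resolve_right (by linarith)
  refine ⟨⟨A 1 1, ?_⟩, hA01⟩
  funext i
  fin_cases i <;> simp [Matrix.mulVec, dotProduct, Fin.sum_univ_two, hA01]
end

section
/- For every 2×2 real symmetric matrix S and every θ ∈ ℝ, the matrix A = R_{θ/2+π/4} · S · R_{θ/2−π/4} satisfies A₂₁ − A₁₂ = sin θ · trace(S). Consequently, the rotational component γ_r of A equals sin θ · trace(S)/2. -/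
open Matrix Real

theorem stmt13 (S : Matrix (Fin 2) (Fin 2) ℝ) (hS : S.IsSymm) (θ : ℝ)
    (A : Matrix (Fin 2) (Fin 2) ℝ)
    (hA : A = rot (θ / 2 + π / 4) * S * rot (θ / 2 - π / 4)) :
    A 1 0 - A 0 1 = Real.sin θ * S.trace ∧
    (A 1 0 - A 0 1) / 2 = Real.sin θ * S.trace / 2 := by
  have h10 : S 1 0 = S 0 1 := by
    have := congrFun (congrFun hS 0) 1
    simpa [Matrix.transpose_apply] using this
  have key : A 1 0 - A 0 1 = Real.sin θ * S.trace := by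
    subst hA
    have hθ : Real.sin θ = 2 * Real.sin (θ/2) * Real.cos (θ/2) := by
      rw [← Real.sin_two_mul]; ring_nf
    simp [rot, Matrix.mul_apply, Matrix.vecMul, dotProduct, Fin.sum_univ_two, Matrix.trace_fin_two,
      Real.sin_add, Real.cos_add, Real.sin_sub, Real.cos_sub,
      Real.sin_pi_div_four, Real.cos_pi_div_four, h10, hθ]
    have hs2 : Real.sqrt 2 * Real.sqrt 2 = 2 := Real.mul_self_sqrt (by norm_num)
    linear_combination (Real.sin (θ/2) * Real.cos (θ/2) * (S 0 0 + S 1 1)) * hs2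
  exact ⟨key, by rw [key]⟩
end
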